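/- Let p ∈ D[X] be monic non-constant and square-free, p = ∏_{i=1}^k p_i with p_i monic, distinct, irreducible over D. Then Int_K(Ω_p, D̄)/(p(X)·K[X]) ≅ ∏_{i=1}^k D_{K_i}, where K_i = K[X]/(p_i(X)) and D_{K_i} is the integral closure of D in K_i. -/

import Mathlib

/-!
Over `K` the factors `q_i` stay irreducible (Gauss, `D` integrally closed) and, being monic and
distinct, are pairwise coprime. For a root `x` of `q_i`, evaluation at `x` embeds the field
`K_i = K[X]/(q_i)` into `K̄`, so `f(x)` is integral over `D` iff the class of `f` in `K_i` is.
As every root of `p` is a root of some `q_i` and every `q_i` has a root in `K̄`, reduction modulo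
the `q_i` maps `Int_K(Ω_p, D̄)` into `∏ D_{K_i}`, onto it by the Chinese remainder theorem
`K[X]/(p) ≅ ∏ K_i`, with kernel `p·K[X] ∩ Int_K(Ω_p, D̄)`.
-/

open Polynomial

variable (D : Type*) [CommRing D] [IsDomain D]

noncomputable abbrev K := FractionRing D

/-- The ring `Int_K(Ω, D̄) = {f ∈ K[X] : f(Ω) ⊆ D̄}` of polynomials that are integral-valued on
a set `Ω` of elements of an extension `L` of `K`, as a subring of `K[X]`. -/
noncomputable def IntInt (L : Type*) [Field L] [Algebra D L] [Algebra (K D) L]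
    [IsScalarTower D (K D) L] (Ω : Set L) : Subring (Polynomial (K D)) where
  carrier := {f | ∀ x ∈ Ω, IsIntegral D ((f.map (algebraMap (K D) L)).eval x)}
  zero_mem' := by intro x _; simpa using isIntegral_zero
  one_mem' := by intro x _; simpa using isIntegral_one
  add_mem' := by
    intro f g hf hg x hx
    simpa [Polynomial.map_add] using (hf x hx).add (hg x hx)
  mul_mem' := by
    intro f g hf hg x hx
    simpa [Polynomial.map_mul] using (hf x hx).mul (hg x hx)
  neg_mem' := by
    intro f hf x hx
    simpa [Polynomial.map_neg] using (hf x hx).neg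

open Function

theorem Polynomial.isCoprime_of_monic_of_irreducible {F : Type*} [Field F] {f g : F[X]}
    (hf : f.Monic) (hg : g.Monic) (hfi : Irreducible f) (hgi : Irreducible g) (hne : f ≠ g) :
    IsCoprime f g := by
  rw [hfi.coprime_iff_not_dvd]
  exact fun hdvd => hne (eq_of_monic_of_associated hf hg (hfi.associated_of_dvd hgi hdvd))

theorem isIntegral_mk_span_iff_isIntegral_aeval {R F L : Type*} [CommRing R] [Field F] [Field L]
    [Algebra R F] [Algebra F L] [Algebra R L] [IsScalarTower R F L] {g : F[X]}
    (hg : Irreducible g) {x : L} (hx : aeval x g = 0) (f : F[X]) :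
    IsIntegral R (Ideal.Quotient.mk (Ideal.span {g}) f) ↔ IsIntegral R (aeval x f) := by
  have := Fact.mk hg
  let σ : AdjoinRoot g →ₐ[R] L := AdjoinRoot.liftAlgHom g (IsScalarTower.toAlgHom R F L) x hx
  have hσ : σ (AdjoinRoot.mk g f) = aeval x f := rfl
  rw [← hσ, isIntegral_algHom_iff σ σ.toRingHom.injective]
  rfl

namespace IntInt

variable {D} {L : Type*} [Field L] [Algebra D L] [Algebra (K D) L] [IsScalarTower D (K D) L]
  {ι : Type*} [Fintype ι] {g : ι → (K D)[X]} {Ω : Set L}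

theorem mem_iff_forall_isIntegral_mk [IsAlgClosed L] (hg : ∀ i, Irreducible (g i))
    (hΩ : ∀ x, x ∈ Ω ↔ aeval x (∏ i, g i) = 0) (f : (K D)[X]) :
    f ∈ IntInt D L Ω ↔ ∀ i, IsIntegral D (Ideal.Quotient.mk (Ideal.span {g i}) f) := by
  change (∀ x ∈ Ω, IsIntegral D ((f.map (algebraMap (K D) L)).eval x)) ↔ _
  simp only [eval_map_algebraMap]
  constructor
  · intro hf i
    obtain ⟨x, hx⟩ :=
      IsAlgClosed.exists_aeval_eq_zero L (g i) (degree_pos_of_irreducible (hg i)).ne'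
    have hxΩ : x ∈ Ω := by
      rw [hΩ, map_prod]
      exact Finset.prod_eq_zero (Finset.mem_univ i) hx
    exact (isIntegral_mk_span_iff_isIntegral_aeval (hg i) hx f).2 (hf x hxΩ)
  · intro hf x hxΩ
    rw [hΩ, map_prod, Finset.prod_eq_zero_iff] at hxΩ
    obtain ⟨i, -, hx⟩ := hxΩ
    exact (isIntegral_mk_span_iff_isIntegral_aeval (hg i) hx f).1 (hf i)

variable (D L) in
noncomputable def toPiIntegralClosure [IsAlgClosed L] (hg : ∀ i, Irreducible (g i))
    (hΩ : ∀ x, x ∈ Ω ↔ aeval x (∏ i, g i) = 0) :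
    IntInt D L Ω →+* ∀ i, integralClosure D ((K D)[X] ⧸ Ideal.span {g i}) :=
  RingHom.pi fun i => ((Ideal.Quotient.mk _).comp (IntInt D L Ω).subtype).codRestrict _
    fun f => (mem_iff_forall_isIntegral_mk hg hΩ f).1 f.2 i

theorem ker_toPiIntegralClosure [IsAlgClosed L] (hg : ∀ i, Irreducible (g i))
    (hcop : Pairwise (IsCoprime on g)) (hΩ : ∀ x, x ∈ Ω ↔ aeval x (∏ i, g i) = 0) :
    RingHom.ker (toPiIntegralClosure D L hg hΩ) =
      (Ideal.span {∏ i, g i}).comap (IntInt D L Ω).subtype := by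
  ext f
  rw [RingHom.mem_ker, Ideal.mem_comap, Ideal.mem_span_singleton, funext_iff]
  simp only [Pi.zero_apply, Subtype.ext_iff, ZeroMemClass.coe_zero]
  change (∀ i, Ideal.Quotient.mk _ (f : (K D)[X]) = 0) ↔ _
  simp only [Ideal.Quotient.eq_zero_iff_mem, Ideal.mem_span_singleton]
  exact ⟨Fintype.prod_dvd_of_coprime hcop,
    fun h i => (Finset.dvd_prod_of_mem g (Finset.mem_univ i)).trans h⟩

theorem toPiIntegralClosure_surjective [IsAlgClosed L] (hg : ∀ i, Irreducible (g i))
    (hcop : Pairwise (IsCoprime on g)) (hΩ : ∀ x, x ∈ Ω ↔ aeval x (∏ i, g i) = 0) :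
    Surjective (toPiIntegralClosure D L hg hΩ) := by
  intro y
  have hcopI : Pairwise (IsCoprime on fun i => Ideal.span {g i}) :=
    fun i j hij => (Ideal.isCoprime_span_singleton_iff _ _).2 (hcop hij)
  obtain ⟨f', hf'⟩ := Ideal.quotientInfToPiQuotient_surj hcopI fun i => (y i : _)
  obtain ⟨f, rfl⟩ := Ideal.Quotient.mk_surjective f'
  have hfy : ∀ i, Ideal.Quotient.mk (Ideal.span {g i}) f = y i := fun i => by
    simpa only [Ideal.quotientInfToPiQuotient_mk'] using congrFun hf' i
  have hf : f ∈ IntInt D L Ω :=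
    (mem_iff_forall_isIntegral_mk hg hΩ f).2 fun i => hfy i ▸ (y i).2
  exact ⟨⟨f, hf⟩, funext fun i => Subtype.ext (hfy i)⟩

variable (D L) in
noncomputable def quotientEquivPiIntegralClosure [IsAlgClosed L] (hg : ∀ i, Irreducible (g i))
    (hcop : Pairwise (IsCoprime on g)) (hΩ : ∀ x, x ∈ Ω ↔ aeval x (∏ i, g i) = 0) :
    IntInt D L Ω ⧸ (Ideal.span {∏ i, g i}).comap (IntInt D L Ω).subtype ≃+*
      ∀ i, integralClosure D ((K D)[X] ⧸ Ideal.span {g i}) :=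
  (Ideal.quotEquivOfEq (ker_toPiIntegralClosure hg hcop hΩ).symm).trans
    (RingHom.quotientKerEquivOfSurjective (toPiIntegralClosure_surjective hg hcop hΩ))

end IntInt

theorem intInt_quotient_iso [IsIntegrallyClosed D]
    (L : Type*) [Field L] [Algebra D L] [Algebra (K D) L] [IsScalarTower D (K D) L]
    [IsAlgClosed L]
    {ι : Type*} [Fintype ι] (q : ι → D[X]) (hq : ∀ i, (q i).Monic)
    (hirr : ∀ i, Irreducible (q i)) (hinj : Function.Injective q)
    (p : D[X]) (hp : p = ∏ i, q i) :
    Nonempty ((↥(IntInt D L {x : L | (p.map (algebraMap D L)).eval x = 0}) ⧸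
        (Ideal.span {p.map (algebraMap D (K D))}).comap
          (IntInt D L {x : L | (p.map (algebraMap D L)).eval x = 0}).subtype) ≃+*
      ∀ i, ↥(integralClosure D
        (Polynomial (K D) ⧸ Ideal.span {(q i).map (algebraMap D (K D))}))) := by
  let g i := (q i).map (algebraMap D (K D))
  have hg i : Irreducible (g i) :=
    (hq i).irreducible_iff_irreducible_map_fraction_map.1 (hirr i)
  have hcop : Pairwise (IsCoprime on g) := fun i j hij =>
    isCoprime_of_monic_of_irreducible ((hq i).map _) ((hq j).map _) (hg i) (hg j)
      ((map_injective _ (IsFractionRing.injective D (K D))).ne (hinj.ne hij))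
  have hpg : p.map (algebraMap D (K D)) = ∏ i, g i := by rw [hp, Polynomial.map_prod]
  have hΩ (x : L) :
      x ∈ {x : L | (p.map (algebraMap D L)).eval x = 0} ↔ aeval x (∏ i, g i) = 0 := by
    rw [Set.mem_ofPred, eval_map_algebraMap, ← hpg, aeval_map_algebraMap]
  rw [hpg]
  exact ⟨IntInt.quotientEquivPiIntegralClosure D L hg hcop hΩ⟩
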